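/- Let L be symmetric PSD with unit eigenvectors u₁,...,u_k (eigenvalues 0 < λ₁ ≤ ... ≤ λ_k), and suppose L_c and L are (U_i, ε_i)-similar for each i ≤ k (i.e., ‖u_i − Πu_i‖_L ≤ ε_i‖u_i‖_L with Π = P^+P). Then the single-level n-means cost of the corresponding partition satisfies Σ_{i≤k} ε_i ≥ ‖(I − Π)U_k‖²_F ≥ K_n(U_k, 𝒫*), the optimal n-means cost of the rows of U_k. -/

import Mathlib

open Matrix Finset

/-- Laplacian-consistent coarsening matrix of a partition given by `φ`. -/
noncomputable def cP {N n : ℕ} (φ : Fin N → Fin n) : Matrix (Fin n) (Fin N) ℝ :=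
  Matrix.of fun r i =>
    if φ i = r then ((Finset.univ.filter fun j => φ j = r).card : ℝ)⁻¹ else 0

/-- Its pseudoinverse: `P⁺ i r = 1` if `φ i = r`, else `0`. -/
def cPp {N n : ℕ} (φ : Fin N → Fin n) : Matrix (Fin N) (Fin n) ℝ :=
  Matrix.of fun i r => if φ i = r then (1 : ℝ) else 0

/-- The semi-norm `‖x‖_L = √(xᵀ L x)`. -/
noncomputable def lnorm {N : ℕ} (L : Matrix (Fin N) (Fin N) ℝ) (x : Fin N → ℝ) : ℝ :=
  Real.sqrt (x ⬝ᵥ (L *ᵥ x))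

/-- The `n`-means cost of assigning the rows of `U` to clusters via `ψ`. -/
noncomputable def kcost {N n k : ℕ} (U : Matrix (Fin N) (Fin k) ℝ)
    (ψ : Fin N → Fin n) : ℝ :=
  ∑ r : Fin n, ∑ i ∈ Finset.univ.filter fun i => ψ i = r, ∑ a,
    (U i a - (∑ j ∈ Finset.univ.filter fun j => ψ j = r, U j a) /
      ((Finset.univ.filter fun j => ψ j = r).card : ℝ)) ^ 2

/-!
`Π = P⁺P` is the orthogonal projection onto vectors that are constant on the clusters, so the
residual `y = u_i - Π u_i` satisfies `yᵀ u_i = ‖y‖²`, hence `yᵀ L u_i = λ_i ‖y‖²`. Cauchy–Schwarz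
for the semi-inner product `xᵀ L y`, together with `‖y‖_L ≤ ε_i ‖u_i‖_L = ε_i √λ_i`, gives
`λ_i ‖y‖² ≤ ε_i λ_i`, i.e. `‖Π⊥ u_i‖² ≤ ε_i`; summing over `i` bounds `‖Π⊥ U_k‖²_F`. Since
`(Π U)_j` is the centroid of the cluster of `j`, `‖Π⊥ U_k‖²_F` is the `n`-means cost of the
partition itself, which dominates the optimal one.
-/

section Projection

variable {N n : ℕ} (φ : Fin N → Fin n)

lemma cPp_mul_cP_apply (i j : Fin N) :
    (cPp φ * cP φ) i j =
      if φ i = φ j then ((univ.filter fun l => φ l = φ i).card : ℝ)⁻¹ else 0 := by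
  simp only [mul_apply, cPp, cP, of_apply]
  rw [sum_eq_single (φ i)]
  · simp [eq_comm]
  · intro r _ hr
    simp [Ne.symm hr]
  · simp

lemma cPp_mul_cP_mulVec_apply (x : Fin N → ℝ) (i : Fin N) :
    ((cPp φ * cP φ) *ᵥ x) i =
      (∑ j ∈ univ.filter fun j => φ j = φ i, x j) /
        ((univ.filter fun j => φ j = φ i).card : ℝ) := by
  simp only [mulVec, dotProduct, cPp_mul_cP_apply, ite_mul, zero_mul, div_eq_mul_inv, sum_mul]
  rw [← sum_filter]
  exact sum_congr (by ext j; simp [eq_comm]) fun j _ => mul_comm _ _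

lemma transpose_cPp_mul_cP : (cPp φ * cP φ)ᵀ = cPp φ * cP φ := by
  ext i j
  simp only [transpose_apply, cPp_mul_cP_apply]
  split_ifs with h h' h'
  · rw [h]
  · exact absurd h.symm h'
  · exact absurd h'.symm h
  · rfl

lemma isIdempotentElem_cPp_mul_cP : IsIdempotentElem (cPp φ * cP φ) := by
  -- `Π x` is constant on each cluster, so averaging it once more changes nothing.
  refine ext_iff_mulVec.2 fun x => funext fun i => ?_
  have hcard : ((univ.filter fun j => φ j = φ i).card : ℝ) ≠ 0 :=
    Nat.cast_ne_zero.2 (card_ne_zero.2 ⟨i, by simp⟩)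
  rw [← mulVec_mulVec, cPp_mul_cP_mulVec_apply,
    sum_congr rfl fun j hj => by rw [cPp_mul_cP_mulVec_apply, (mem_filter.1 hj).2],
    sum_const, nsmul_eq_mul, mul_div_cancel_left₀ _ hcard, cPp_mul_cP_mulVec_apply]

end Projection

lemma sub_mulVec_dotProduct_mulVec_eq_zero {ι R : Type*} [Fintype ι] [CommRing R]
    {A : Matrix ι ι R} (hsymm : Aᵀ = A) (hidem : IsIdempotentElem A) (x : ι → R) :
    (x - A *ᵥ x) ⬝ᵥ (A *ᵥ x) = 0 := by
  rw [sub_dotProduct, dotProduct_mulVec, ← mulVec_transpose, hsymm, dotProduct_mulVec (A *ᵥ x),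
    ← mulVec_transpose, hsymm, mulVec_mulVec, hidem.eq, sub_self]

lemma sq_dotProduct_mulVec_le {ι : Type*} [Fintype ι] {L : Matrix ι ι ℝ} (hL : L.PosSemidef)
    (x y : ι → ℝ) : (x ⬝ᵥ (L *ᵥ y)) ^ 2 ≤ (x ⬝ᵥ (L *ᵥ x)) * (y ⬝ᵥ (L *ᵥ y)) := by
  classical
  have hsymm : y ⬝ᵥ (L *ᵥ x) = x ⬝ᵥ (L *ᵥ y) := by
    rw [dotProduct_mulVec, ← mulVec_transpose, ← conjTranspose_eq_transpose_of_trivial, hL.1,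
      dotProduct_comm]
  have hcs := LinearMap.BilinForm.apply_mul_apply_le_of_forall_zero_le (toLinearMap₂' ℝ L)
    (fun z => by simpa [toLinearMap₂'_apply'] using hL.dotProduct_mulVec_nonneg z) x y
  simpa only [toLinearMap₂'_apply', hsymm, ← sq] using hcs

lemma dotProduct_sub_mulVec_self_le {N : ℕ} {L A : Matrix (Fin N) (Fin N) ℝ}
    (hL : L.PosSemidef) (hsymm : Aᵀ = A) (hidem : IsIdempotentElem A) {u : Fin N → ℝ}
    {lam ε : ℝ} (heig : L *ᵥ u = lam • u) (hu : u ⬝ᵥ u = 1) (hlam : 0 < lam)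
    (hsim : lnorm L (u - A *ᵥ u) ≤ ε * lnorm L u) :
    (u - A *ᵥ u) ⬝ᵥ (u - A *ᵥ u) ≤ ε := by
  set y := u - A *ᵥ u
  have hyu : y ⬝ᵥ u = y ⬝ᵥ y := by
    conv_lhs => rw [← sub_add_cancel u (A *ᵥ u)]
    rw [dotProduct_add, sub_mulVec_dotProduct_mulVec_eq_zero hsymm hidem, add_zero]
  have huLu : u ⬝ᵥ (L *ᵥ u) = lam := by rw [heig, dotProduct_smul, hu, smul_eq_mul, mul_one]
  have hyLu : y ⬝ᵥ (L *ᵥ u) = lam * (y ⬝ᵥ y) := by rw [heig, dotProduct_smul, hyu, smul_eq_mul]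
  rw [lnorm, lnorm, huLu] at hsim
  have hε : 0 ≤ ε := nonneg_of_mul_nonneg_left ((Real.sqrt_nonneg _).trans hsim)
    (Real.sqrt_pos.2 hlam)
  have hyLy : y ⬝ᵥ (L *ᵥ y) ≤ ε ^ 2 * lam := by
    have hsq := pow_le_pow_left₀ (Real.sqrt_nonneg _) hsim 2
    have hq : 0 ≤ y ⬝ᵥ (L *ᵥ y) := by simpa using hL.dotProduct_mulVec_nonneg y
    rwa [Real.sq_sqrt hq, mul_pow, Real.sq_sqrt hlam.le] at hsq
  have hcs : (lam * (y ⬝ᵥ y)) ^ 2 ≤ (ε * lam) ^ 2 := calc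
    (lam * (y ⬝ᵥ y)) ^ 2 ≤ (y ⬝ᵥ (L *ᵥ y)) * lam := by
      rw [← hyLu, ← huLu]; exact sq_dotProduct_mulVec_le hL y u
    _ ≤ (ε * lam) ^ 2 := by nlinarith
  have hle := le_of_pow_le_pow_left₀ two_ne_zero (mul_nonneg hε hlam.le) hcs
  rw [mul_comm ε] at hle
  exact le_of_mul_le_mul_left hle hlam

lemma kcost_nonneg {N n k : ℕ} (U : Matrix (Fin N) (Fin k) ℝ) (ψ : Fin N → Fin n) :
    0 ≤ kcost U ψ := by
  unfold kcost
  positivity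

lemma kcost_eq_sum_sq_sub_cPp_mul_cP_mul {N n k : ℕ} (U : Matrix (Fin N) (Fin k) ℝ)
    (φ : Fin N → Fin n) :
    kcost U φ = ∑ i, ∑ a, ((U - cPp φ * cP φ * U) i a) ^ 2 := by
  rw [kcost, ← sum_fiberwise univ φ]
  refine sum_congr rfl fun r _ => sum_congr rfl fun i hi => sum_congr rfl fun a _ => ?_
  rw [Matrix.sub_apply, ← (mem_filter.1 hi).2]
  exact congrArg (fun c => (U i a - c) ^ 2) (cPp_mul_cP_mulVec_apply φ (fun j => U j a) i).symm

theorem epsilon_lower_bound_general {N n k : ℕ}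
    (L : Matrix (Fin N) (Fin N) ℝ) (hL : L.PosSemidef)
    (u : Fin k → Fin N → ℝ) (lam : Fin k → ℝ)
    (heig : ∀ i, L *ᵥ u i = lam i • u i)
    (horth : ∀ i j, u i ⬝ᵥ u j = if i = j then (1 : ℝ) else 0)
    (hpos : ∀ i, 0 < lam i)
    (φ : Fin N → Fin n)
    (ε : Fin k → ℝ)
    (hsim : ∀ i : Fin k, ∀ x : Fin N → ℝ,
      x ∈ Submodule.span ℝ (u '' {j | j ≤ i}) →
      lnorm L (x - (cPp φ * cP φ) *ᵥ x) ≤ ε i * lnorm L x) :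
    (∑ i, ε i) ≥
      (∑ i, ∑ a, ((Matrix.of (fun i a => u a i) -
        (cPp φ * cP φ) * Matrix.of (fun i a => u a i)) i a) ^ 2) ∧
    (∑ i, ∑ a, ((Matrix.of (fun i a => u a i) -
        (cPp φ * cP φ) * Matrix.of (fun i a => u a i)) i a) ^ 2) ≥
      ⨅ ψ : Fin N → Fin n, kcost (Matrix.of fun i a => u a i) ψ := by
  refine ⟨?_, ?_⟩
  · calc (∑ i, ∑ a, ((Matrix.of (fun i a => u a i) -
          (cPp φ * cP φ) * Matrix.of (fun i a => u a i)) i a) ^ 2)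
        = ∑ a, (u a - (cPp φ * cP φ) *ᵥ u a) ⬝ᵥ (u a - (cPp φ * cP φ) *ᵥ u a) := by
          rw [sum_comm]
          simp only [dotProduct, sq]
          rfl
      _ ≤ ∑ a, ε a := sum_le_sum fun a _ =>
          dotProduct_sub_mulVec_self_le hL (transpose_cPp_mul_cP φ)
            (isIdempotentElem_cPp_mul_cP φ) (heig a) (by simp [horth]) (hpos a)
            (hsim a (u a) (Submodule.subset_span (Set.mem_image_of_mem u (le_refl a))))
  · rw [← kcost_eq_sum_sq_sub_cPp_mul_cP_mul]
    exact ciInf_le ⟨0, by rintro _ ⟨ψ, rfl⟩; exact kcost_nonneg _ ψ⟩ φ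

/-- Lower bound on the restricted-spectral-approximation constants of a single-level
Laplacian-consistent coarsening: `Σ_{i≤k} ε_i ≥ ‖(I − Π)U_k‖²_F ≥ K_n(U_k, 𝒫*)`,
the optimal `n`-means cost of the rows of `U_k`. -/
theorem epsilon_lower_bound {N n k : ℕ} (hn : 0 < n)
    (L : Matrix (Fin N) (Fin N) ℝ) (hL : L.PosSemidef)
    (u : Fin k → Fin N → ℝ) (lam : Fin k → ℝ)
    (heig : ∀ i, L *ᵥ u i = lam i • u i)
    (horth : ∀ i j, u i ⬝ᵥ u j = if i = j then (1 : ℝ) else 0)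
    (hpos : ∀ i, 0 < lam i) (hmono : Monotone lam)
    (φ : Fin N → Fin n) (hφ : Function.Surjective φ)
    (ε : Fin k → ℝ)
    (hsim : ∀ i : Fin k, ∀ x : Fin N → ℝ,
      x ∈ Submodule.span ℝ (u '' {j | j ≤ i}) →
      lnorm L (x - (cPp φ * cP φ) *ᵥ x) ≤ ε i * lnorm L x) :
    (∑ i, ε i) ≥
      (∑ i, ∑ a, ((Matrix.of (fun i a => u a i) -
        (cPp φ * cP φ) * Matrix.of (fun i a => u a i)) i a) ^ 2) ∧
    (∑ i, ∑ a, ((Matrix.of (fun i a => u a i) -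
        (cPp φ * cP φ) * Matrix.of (fun i a => u a i)) i a) ^ 2) ≥
      ⨅ ψ : Fin N → Fin n, kcost (Matrix.of fun i a => u a i) ψ :=
  epsilon_lower_bound_general L hL u lam heig horth hpos φ ε hsim
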